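/- Let α > 0 and let φ be the cardinal hyperbolic GB-splines with phase α. Define, for p ≥ 2, f_p^{H_α}(θ) := −φ̈ p ((p+1)/2) − 2·Σ_{k=1}^{⌊p/2⌋} φ̈ p ((p+1)/2 − k)·cos(kθ), where φ̈ p is the second derivative of t ↦ φ p t. Then for every integer p ≥ 4 and every θ ∈ [−π, π]: f_p^{H_α}(θ) ≤ 2 − 2·cos θ. -/

import Mathlib

/-!
The recurrence says `φ (q + 1) = movingAverage (φ q)` (convolution with the indicator of
`[0, 1]`), so every `φ q` is a nonnegative bump on `[0, q + 1]`, symmetric about its centre, of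
integral one, and for `q ≥ 2` its integer translates form a partition of unity. For `p = q + 2`
the second derivative of `φ p` is the second difference `φ q t - 2 φ q (t - 1) + φ q (t - 2)`.
Hence, with the central samples `h k = φ q ((q + 1) / 2 - k)`, summation by parts gives
`fSym φ p θ = (2 - 2 cos θ) ∑ₖ h k cos (k θ)`, and the last sum is at most `∑ₖ h k = 1`.
-/

open Real MeasureTheory

noncomputable def fSym (φ : ℕ → ℝ → ℝ) (p : ℕ) (θ : ℝ) : ℝ :=
  -(deriv (deriv (φ p)) (((p : ℝ) + 1) / 2)) -
    2 * ∑ k ∈ Finset.Icc 1 (p / 2),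
      deriv (deriv (φ p)) (((p : ℝ) + 1) / 2 - (k : ℝ)) * Real.cos ((k : ℝ) * θ)

open intervalIntegral Function

lemma sum_Icc_neg_eq_of_even {M : Type*} [AddCommMonoid M] (g : ℤ → M)
    (heven : ∀ k, g (-k) = g k) (K : ℕ) :
    ∑ k ∈ Finset.Icc (-K : ℤ) K, g k = g 0 + 2 • ∑ k ∈ Finset.Icc 1 K, g k := by
  induction K with
  | zero => simp
  | succ K ih =>
    have hIcc : Finset.Icc (-(K + 1 : ℕ) : ℤ) (K + 1 : ℕ) =
        insert (-(K + 1) : ℤ) (insert (K + 1 : ℤ) (Finset.Icc (-K : ℤ) K)) := by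
      ext k; simp only [Finset.mem_Icc, Finset.mem_insert]; omega
    rw [hIcc, Finset.sum_insert (by simp only [Finset.mem_Icc, Finset.mem_insert]; omega),
      Finset.sum_insert (by simp), ih, Finset.sum_Icc_succ_top (by omega), heven]
    push_cast
    abel

lemma finsum_eq_of_even {M : Type*} [AddCommMonoid M] (g : ℤ → M)
    (heven : ∀ k, g (-k) = g k) (K : ℕ) (hK : ∀ k : ℤ, K < k → g k = 0) :
    ∑ᶠ k, g k = g 0 + 2 • ∑ k ∈ Finset.Icc 1 K, g k := by
  rw [finsum_eq_sum_of_support_subset g (s := Finset.Icc (-K : ℤ) K),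
    sum_Icc_neg_eq_of_even g heven]
  intro k hk
  rw [Finset.coe_Icc, Set.mem_Icc]
  by_contra hout
  rcases not_and_or.mp hout with hlt | hlt
  · exact hk (by rw [← neg_neg k, heven]; exact hK _ (by omega))
  · exact hk (hK k (by omega))

lemma finsum_eq_sum_range_of_support {M : Type*} [AddCommMonoid M] (g : ℤ → M) (b : ℤ) (n : ℕ)
    (hg : ∀ k, g k ≠ 0 → b - n < k ∧ k ≤ b) :
    ∑ᶠ k, g k = ∑ j ∈ Finset.range n, g (b - j) := by
  let e : ℕ ↪ ℤ := ⟨fun j => b - j, fun i j hij => by simpa using hij⟩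
  rw [finsum_eq_sum_of_support_subset g (s := (Finset.range n).map e), Finset.sum_map]
  · rfl
  intro k hk
  obtain ⟨hlo, hhi⟩ := hg k hk
  simp only [Finset.coe_map, Finset.coe_range, Set.mem_image, Set.mem_Iio]
  exact ⟨(b - k).toNat, by omega, show b - ((b - k).toNat : ℤ) = k by omega⟩

lemma finsum_secondDiff_mul_cos (h : ℤ → ℝ) (hh : HasFiniteSupport h) (θ : ℝ) :
    ∑ᶠ k : ℤ, (h (k - 1) - 2 * h k + h (k + 1)) * cos (k * θ) =
      (2 * cos θ - 2) * ∑ᶠ k : ℤ, h k * cos (k * θ) := by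
  have hfin : ∀ c : ℤ → ℝ, HasFiniteSupport fun k => h k * c k := fun c => hh.mul_left c
  have hshift : ∀ m : ℤ, ∑ᶠ k : ℤ, h (k + m) * cos (k * θ) =
      ∑ᶠ k : ℤ, h k * cos ((k - m) * θ) := fun m => by
    rw [← finsum_comp_equiv (Equiv.subRight m)]
    simp
  have hfinShift : ∀ (m : ℤ), HasFiniteSupport fun k => h (k + m) * cos (k * θ) :=
    fun m => (hh.comp_of_injective (add_left_injective m)).mul_left _
  calc ∑ᶠ k : ℤ, (h (k - 1) - 2 * h k + h (k + 1)) * cos (k * θ)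
      = ∑ᶠ k : ℤ, (h (k + -1) * cos (k * θ) + h (k + 1) * cos (k * θ)
          - 2 * (h k * cos (k * θ))) := finsum_congr fun k => by rw [Int.add_neg_one]; ring
    _ = ∑ᶠ k : ℤ, h k * cos ((k + 1) * θ) + ∑ᶠ k : ℤ, h k * cos ((k - 1) * θ)
          - 2 * ∑ᶠ k : ℤ, h k * cos (k * θ) := by
      rw [finsum_sub_distrib, finsum_add_distrib (hfinShift _) (hfinShift _), mul_finsum,
        hshift (-1), hshift 1]
      · simp only [Int.cast_neg, Int.cast_one, sub_neg_eq_add]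
      · exact (hfinShift _).add (hfinShift _)
      · exact (hfin _).mul_right _
    _ = ∑ᶠ k : ℤ, (2 * cos θ - 2) * (h k * cos (k * θ)) := by
      rw [← finsum_add_distrib (hfin _) (hfin _), mul_finsum, ← finsum_sub_distrib]
      · refine finsum_congr fun k => ?_
        rw [add_mul, sub_mul, one_mul, cos_add, cos_sub]
        ring
      · exact (hfin _).add (hfin _)
      · exact (hfin _).mul_right _
    _ = (2 * cos θ - 2) * ∑ᶠ k : ℤ, h k * cos (k * θ) := (mul_finsum _ _).symm

lemma neg_finsum_secondDiff_mul_cos_le (h : ℤ → ℝ) (hh : HasFiniteSupport h)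
    (hnonneg : ∀ k, 0 ≤ h k) (hsum : ∑ᶠ k, h k = 1) (θ : ℝ) :
    -∑ᶠ k : ℤ, (h (k - 1) - 2 * h k + h (k + 1)) * cos (k * θ) ≤ 2 - 2 * cos θ := by
  have hcos : ∑ᶠ k : ℤ, h k * cos (k * θ) ≤ 1 :=
    hsum ▸ finsum_le_finsum' (hh.mul_left _) hh
      fun k => mul_le_of_le_one_right (hnonneg k) (cos_le_one _)
  rw [finsum_secondDiff_mul_cos h hh]
  nlinarith [cos_le_one θ]

section MovingAverage

noncomputable def movingAverage (f : ℝ → ℝ) (t : ℝ) : ℝ := ∫ s in (t - 1)..t, f s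

variable {f : ℝ → ℝ}

lemma integral_eq_zero_of_forall_mem_Ioc {a b : ℝ} (hab : a ≤ b)
    (h : ∀ s, a < s → s ≤ b → f s = 0) : ∫ s in a..b, f s = 0 :=
  integral_zero_ae (.of_forall fun s hs => by
    rw [Set.uIoc_of_le hab] at hs; exact h s hs.1 hs.2)

lemma movingAverage_eq_sub (hf : ∀ a b, IntervalIntegrable f volume a b) (t : ℝ) :
    movingAverage f t = (∫ s in (0 : ℝ)..t, f s) - ∫ s in (0 : ℝ)..(t - 1), f s :=
  (integral_interval_sub_left (hf 0 t) (hf 0 (t - 1))).symm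

lemma continuous_movingAverage (hf : ∀ a b, IntervalIntegrable f volume a b) :
    Continuous (movingAverage f) := by
  have hP := continuous_primitive hf 0
  rw [funext (movingAverage_eq_sub hf)]
  exact hP.sub (hP.comp (continuous_sub_right 1))

lemma hasDerivAt_movingAverage (hf : Continuous f) (t : ℝ) :
    HasDerivAt (movingAverage f) (f t - f (t - 1)) t := by
  rw [funext (movingAverage_eq_sub fun a b => hf.intervalIntegrable a b)]
  exact (hf.integral_hasStrictDerivAt 0 t).hasDerivAt.sub
    (HasDerivAt.comp_sub_const t 1 (hf.integral_hasStrictDerivAt 0 (t - 1)).hasDerivAt)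

lemma deriv_deriv_movingAverage_movingAverage (hf : Continuous f) (t : ℝ) :
    deriv (deriv (movingAverage (movingAverage f))) t = f t - 2 * f (t - 1) + f (t - 2) := by
  have hg := continuous_movingAverage fun a b => hf.intervalIntegrable a b
  have hd : HasDerivAt (fun u => movingAverage f u - movingAverage f (u - 1))
      (f t - f (t - 1) - (f (t - 1) - f (t - 1 - 1))) t :=
    (hasDerivAt_movingAverage hf t).sub
      (HasDerivAt.comp_sub_const t 1 (hasDerivAt_movingAverage hf (t - 1)))
  rw [funext fun u => (hasDerivAt_movingAverage hg u).deriv, hd.deriv, sub_sub t,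
    one_add_one_eq_two]
  ring

lemma integral_sub_comp_sub_one (hf : ∀ a b, IntervalIntegrable f volume a b)
    (h0 : ∀ t ≤ 0, f t = 0) (t : ℝ) :
    ∫ s in (0 : ℝ)..t, (f s - f (s - 1)) = movingAverage f t := by
  have hshift : IntervalIntegrable (fun s => f (s - 1)) volume 0 t := by
    simpa using (hf (-1) (t - 1)).comp_sub_right 1
  have hvanish : ∫ s in (-1 : ℝ)..0, f s = 0 :=
    integral_eq_zero_of_forall_mem_Ioc (by norm_num) fun s _ hs => h0 s hs
  rw [integral_sub (hf 0 t) hshift, integral_comp_sub_right, zero_sub,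
    ← integral_add_adjacent_intervals (hf (-1) 0) (hf 0 (t - 1)), hvanish, zero_add,
    movingAverage_eq_sub hf]

end MovingAverage

structure IsSymmBump (L : ℝ) (f : ℝ → ℝ) : Prop where
  eq_zero_of_nonpos : ∀ t ≤ 0, f t = 0
  eq_zero_of_le : ∀ t, L ≤ t → f t = 0
  nonneg : ∀ t, 0 ≤ f t
  intervalIntegrable : ∀ a b, IntervalIntegrable f volume a b
  symm : ∀ t, f (L - t) = f t

noncomputable def centralSamples (L : ℝ) (f : ℝ → ℝ) (k : ℤ) : ℝ := f (L / 2 - k)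

namespace IsSymmBump

variable {L : ℝ} {f : ℝ → ℝ}

protected lemma movingAverage (hf : IsSymmBump L f) : IsSymmBump (L + 1) (movingAverage f) where
  eq_zero_of_nonpos t ht := integral_eq_zero_of_forall_mem_Ioc (by linarith)
    fun s _ hs => hf.eq_zero_of_nonpos s (by linarith)
  eq_zero_of_le t ht := integral_eq_zero_of_forall_mem_Ioc (by linarith)
    fun s hs _ => hf.eq_zero_of_le s (by linarith)
  nonneg t := integral_nonneg (by linarith) fun s _ => hf.nonneg s
  intervalIntegrable a b := (continuous_movingAverage hf.intervalIntegrable).intervalIntegrable a b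
  symm t := by
    calc ∫ s in (L + 1 - t - 1)..(L + 1 - t), f s = ∫ s in (t - 1)..t, f (L - s) := by
          rw [integral_comp_sub_left]; ring_nf
      _ = movingAverage f t := integral_congr fun s _ => hf.symm s

lemma integral_of_nonpos (hf : IsSymmBump L f) {x : ℝ} (hx : x ≤ 0) :
    ∫ s in (0 : ℝ)..x, f s = 0 := by
  rw [integral_symm,
    integral_eq_zero_of_forall_mem_Ioc hx fun s _ hs => hf.eq_zero_of_nonpos s hs, neg_zero]

lemma integral_of_le (hf : IsSymmBump L f) {x : ℝ} (hx : L ≤ x) :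
    ∫ s in (0 : ℝ)..x, f s = ∫ s in (0 : ℝ)..L, f s := by
  rw [← integral_add_adjacent_intervals (hf.intervalIntegrable 0 L) (hf.intervalIntegrable L x),
    integral_eq_zero_of_forall_mem_Ioc hx fun s hs _ => hf.eq_zero_of_le s hs.le, add_zero]

/-- With `P` the primitive of `f`, `∫₀^{L+1} (P t - P (t - 1)) dt = ∫_L^{L+1} P - ∫_{-1}^0 P`,
and `P` equals `∫₀^L f` on `[L, L + 1]` and vanishes on `[-1, 0]`. -/
lemma integral_movingAverage (hf : IsSymmBump L f) :
    ∫ t in (0 : ℝ)..(L + 1), movingAverage f t = ∫ s in (0 : ℝ)..L, f s := by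
  set P : ℝ → ℝ := fun x => ∫ s in (0 : ℝ)..x, f s
  have hP : ∀ a b, IntervalIntegrable P volume a b := fun a b =>
    (continuous_primitive hf.intervalIntegrable 0).intervalIntegrable a b
  have htop : ∫ x in L..(L + 1), P x = ∫ s in (0 : ℝ)..L, f s := by
    rw [integral_congr (g := fun _ => ∫ s in (0 : ℝ)..L, f s) fun x hx =>
      hf.integral_of_le (Set.uIcc_of_le (by linarith : L ≤ L + 1) ▸ hx).1]
    simp
  have hbot : ∫ x in (-1 : ℝ)..0, P x = 0 := by
    rw [integral_congr (g := fun _ => 0) fun x hx =>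
      hf.integral_of_nonpos (Set.uIcc_of_le (by norm_num : (-1 : ℝ) ≤ 0) ▸ hx).2]
    simp
  have hshift : IntervalIntegrable (fun x => P (x - 1)) volume 0 (L + 1) := by
    simpa using (hP (-1) L).comp_sub_right 1
  simp_rw [movingAverage_eq_sub hf.intervalIntegrable]
  rw [integral_sub (hP 0 (L + 1)) hshift, integral_comp_sub_right, zero_sub,
    add_sub_cancel_right, ← integral_add_adjacent_intervals (hP 0 L) (hP L (L + 1)),
    ← integral_add_adjacent_intervals (hP (-1) 0) (hP 0 L), htop, hbot]
  ring

/-- `movingAverage f (t - k) = P (t - k) - P (t - k - 1)` for the primitive `P` of `f`, so the sum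
telescopes to `P (+∞) - P (-∞) = ∫₀^L f`. -/
lemma finsum_movingAverage (hf : IsSymmBump L f) (t : ℝ) :
    ∑ᶠ k : ℤ, movingAverage f (t - k) = ∫ s in (0 : ℝ)..L, f s := by
  set n : ℕ := ⌈L⌉₊ + 1
  set u : ℝ := t - ⌈t⌉
  have hu : -1 < u ∧ u ≤ 0 := by
    constructor <;> linarith [Int.le_ceil t, Int.ceil_lt_add_one t]
  have hn : L ≤ u + n := by
    have : (n : ℝ) = ⌈L⌉₊ + 1 := by simp [n]
    linarith [Nat.le_ceil L]
  have hwin : ∀ k : ℤ, movingAverage f (t - k) ≠ 0 → ⌈t⌉ - 1 - n < k ∧ k ≤ ⌈t⌉ - 1 := by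
    intro k hk
    constructor
    · by_contra hk'
      have : (k : ℝ) ≤ ⌈t⌉ - 1 - n := by exact_mod_cast not_lt.mp hk'
      exact hk (hf.movingAverage.eq_zero_of_le _ (by linarith))
    · by_contra hk'
      have : (⌈t⌉ : ℝ) ≤ k := by exact_mod_cast (by omega : ⌈t⌉ ≤ k)
      exact hk (hf.movingAverage.eq_zero_of_nonpos _ (by linarith [Int.le_ceil t]))
  have hterm : ∀ j : ℕ, movingAverage f (t - ((⌈t⌉ - 1 - j : ℤ) : ℝ)) =
      (∫ s in (0 : ℝ)..(u + (j + 1 : ℕ)), f s) - ∫ s in (0 : ℝ)..(u + j), f s := fun j => by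
    rw [movingAverage_eq_sub hf.intervalIntegrable]
    congr 2 <;> push_cast <;> ring
  rw [finsum_eq_sum_range_of_support _ _ n hwin, Finset.sum_congr rfl fun j _ => hterm j,
    Finset.sum_range_sub (fun j : ℕ => ∫ s in (0 : ℝ)..(u + j), f s), Nat.cast_zero, add_zero,
    hf.integral_of_le hn, hf.integral_of_nonpos hu.2, sub_zero]

lemma hasFiniteSupport_centralSamples (hf : IsSymmBump L f) :
    HasFiniteSupport (centralSamples L f) := by
  refine (Set.finite_Icc ⌊-L / 2⌋ ⌈L / 2⌉).subset fun k hk => ?_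
  have hpos : 0 < L / 2 - k := by
    by_contra h; exact hk (hf.eq_zero_of_nonpos _ (not_lt.mp h))
  have hlt : L / 2 - k < L := by
    by_contra h; exact hk (hf.eq_zero_of_le _ (not_lt.mp h))
  constructor
  · exact Int.floor_le_iff.mpr (by linarith)
  · exact Int.le_ceil_iff.mpr (by linarith)

lemma centralSamples_neg (hf : IsSymmBump L f) (k : ℤ) :
    centralSamples L f (-k) = centralSamples L f k := by
  rw [centralSamples, centralSamples, ← hf.symm]
  congr 1
  push_cast
  ring

lemma centralSamples_eq_zero (hf : IsSymmBump L f) {k : ℤ} (hk : L / 2 ≤ k) :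
    centralSamples L f k = 0 :=
  hf.eq_zero_of_nonpos _ (by linarith)

end IsSymmBump

section HyperbolicKernel

noncomputable def hypGBSpline1 (α t : ℝ) : ℝ :=
  if 0 ≤ t ∧ t < 1 then α / (2 * (cosh α - 1)) * sinh (α * t)
  else if 1 ≤ t ∧ t < 2 then α / (2 * (cosh α - 1)) * sinh (α * (2 - t))
  else 0

lemma hypGBSpline1_eq_tent (α t : ℝ) :
    hypGBSpline1 α t = α / (2 * (cosh α - 1)) * sinh (α * max 0 (min t (2 - t))) := by
  unfold hypGBSpline1
  split_ifs
  · rw [show max 0 (min t (2 - t)) = t by grind]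
  · rw [show max 0 (min t (2 - t)) = 2 - t by grind]
  · rw [show max 0 (min t (2 - t)) = 0 by grind, mul_zero, sinh_zero, mul_zero]

variable {α : ℝ}

lemma isSymmBump_hypGBSpline1 (hα : 0 < α) : IsSymmBump 2 (hypGBSpline1 α) := by
  rw [funext (hypGBSpline1_eq_tent α)]
  refine ⟨fun t ht => ?_, fun t ht => ?_, fun t => ?_,
    fun a b => (by fun_prop : Continuous _).intervalIntegrable a b, fun t => ?_⟩
  · rw [max_eq_left ((min_le_left _ _).trans ht), mul_zero, sinh_zero, mul_zero]
  · rw [max_eq_left ((min_le_right _ _).trans (by linarith)), mul_zero, sinh_zero, mul_zero]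
  · exact mul_nonneg (div_nonneg hα.le (by linarith [one_le_cosh α]))
      (sinh_nonneg_iff.mpr (mul_nonneg hα.le (le_max_left _ _)))
  · rw [sub_sub_cancel, min_comm]

lemma integral_hypGBSpline1 (hα : 0 < α) : ∫ t in (0 : ℝ)..2, hypGBSpline1 α t = 1 := by
  have hcosh : cosh α - 1 ≠ 0 := (sub_pos.mpr (one_lt_cosh.mpr hα.ne')).ne'
  have hb := isSymmBump_hypGBSpline1 hα
  have hright : ∫ t in (1 : ℝ)..2, hypGBSpline1 α t = ∫ t in (0 : ℝ)..1, hypGBSpline1 α t := by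
    rw [← integral_congr fun t _ => hb.symm t, integral_comp_sub_left]
    norm_num
  have hleft : ∫ t in (0 : ℝ)..1, hypGBSpline1 α t = 1 / 2 := by
    have hderiv : ∀ x, HasDerivAt (fun t => cosh (α * t) / (2 * (cosh α - 1)))
        (α / (2 * (cosh α - 1)) * sinh (α * x)) x := fun x => by
      have h := ((hasDerivAt_id x).const_mul α).cosh.div_const (2 * (cosh α - 1))
      simp only [id, mul_one] at h
      exact h.congr_deriv (by ring)
    rw [integral_congr fun t ht => ?_, integral_eq_sub_of_hasDerivAt (fun x _ => hderiv x)
      ((by fun_prop : Continuous _).intervalIntegrable 0 1)]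
    · field_simp
      simp only [mul_zero, cosh_zero]
    · rw [Set.uIcc_of_le zero_le_one] at ht
      rw [hypGBSpline1_eq_tent, show max 0 (min t (2 - t)) = t by grind [ht.1, ht.2]]
  rw [← integral_add_adjacent_intervals (hb.intervalIntegrable 0 1) (hb.intervalIntegrable 1 2),
    hright, hleft]
  norm_num

end HyperbolicKernel

section Recurrence

variable {φ : ℕ → ℝ → ℝ}
  (hrec : ∀ q : ℕ, 2 ≤ q → ∀ t : ℝ,
    φ q t = ∫ s in (0 : ℝ)..t, (φ (q - 1) s - φ (q - 1) (s - 1)))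
  (h1 : IsSymmBump 2 (φ 1))

include hrec

lemma succ_eq_movingAverage_of_isSymmBump {q : ℕ} (hq : 1 ≤ q) {L : ℝ}
    (hb : IsSymmBump L (φ q)) : φ (q + 1) = movingAverage (φ q) :=
  funext fun t => (hrec (q + 1) (by omega) t).trans
    (integral_sub_comp_sub_one hb.intervalIntegrable hb.eq_zero_of_nonpos t)

include h1

lemma isSymmBump_of_rec {q : ℕ} (hq : 1 ≤ q) : IsSymmBump (q + 1) (φ q) := by
  induction q, hq using Nat.le_induction with
  | base => norm_num; exact h1
  | succ q hq ih =>
    rw [succ_eq_movingAverage_of_isSymmBump hrec hq ih, Nat.cast_succ]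
    exact ih.movingAverage

lemma succ_eq_movingAverage {q : ℕ} (hq : 1 ≤ q) : φ (q + 1) = movingAverage (φ q) :=
  succ_eq_movingAverage_of_isSymmBump hrec hq (isSymmBump_of_rec hrec h1 hq)

lemma integral_of_rec (hint : ∫ t in (0 : ℝ)..2, φ 1 t = 1) {q : ℕ} (hq : 1 ≤ q) :
    ∫ t in (0 : ℝ)..(q + 1), φ q t = 1 := by
  induction q, hq using Nat.le_induction with
  | base => norm_num; exact hint
  | succ q hq ih =>
    rw [succ_eq_movingAverage hrec h1 hq, Nat.cast_succ,
      (isSymmBump_of_rec hrec h1 hq).integral_movingAverage, ih]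

lemma finsum_of_rec (hint : ∫ t in (0 : ℝ)..2, φ 1 t = 1) {q : ℕ} (hq : 2 ≤ q) (t : ℝ) :
    ∑ᶠ k : ℤ, φ q (t - k) = 1 := by
  obtain ⟨r, hr, rfl⟩ : ∃ r, 1 ≤ r ∧ q = r + 1 := ⟨q - 1, by omega, by omega⟩
  rw [succ_eq_movingAverage hrec h1 hr, (isSymmBump_of_rec hrec h1 hr).finsum_movingAverage,
    integral_of_rec hrec h1 hint hr]

lemma deriv_deriv_of_rec {q : ℕ} (hq : 2 ≤ q) (t : ℝ) :
    deriv (deriv (φ (q + 2))) t = φ q t - 2 * φ q (t - 1) + φ q (t - 2) := by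
  obtain ⟨r, hr, rfl⟩ : ∃ r, 1 ≤ r ∧ q = r + 1 := ⟨q - 1, by omega, by omega⟩
  rw [succ_eq_movingAverage hrec h1 (by omega : 1 ≤ r + 1 + 1),
    succ_eq_movingAverage hrec h1 (by omega : 1 ≤ r + 1), succ_eq_movingAverage hrec h1 hr]
  exact deriv_deriv_movingAverage_movingAverage
    (continuous_movingAverage (isSymmBump_of_rec hrec h1 hr).intervalIntegrable) t

lemma fSym_eq_neg_finsum_secondDiff {q : ℕ} (hq : 2 ≤ q) (θ : ℝ) :
    fSym φ (q + 2) θ = -∑ᶠ k : ℤ, (centralSamples (q + 1) (φ q) (k - 1)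
      - 2 * centralSamples (q + 1) (φ q) k + centralSamples (q + 1) (φ q) (k + 1))
        * cos (k * θ) := by
  have hb := isSymmBump_of_rec hrec h1 (by omega : 1 ≤ q)
  set s := centralSamples (q + 1) (φ q)
  have hneg : ∀ k, s (-k) = s k := hb.centralSamples_neg
  have hzero : ∀ k : ℤ, ((q : ℝ) + 1) / 2 ≤ k → s k = 0 :=
    fun k hk => hb.centralSamples_eq_zero hk
  have heven : ∀ k : ℤ, (s (-k - 1) - 2 * s (-k) + s (-k + 1)) * cos ((-k : ℤ) * θ) =
      (s (k - 1) - 2 * s k + s (k + 1)) * cos (k * θ) := fun k => by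
    rw [show -k - 1 = -(k + 1) by ring, show -k + 1 = -(k - 1) by ring, hneg, hneg, hneg,
      Int.cast_neg, neg_mul, cos_neg]
    ring
  have hvanish : ∀ k : ℤ, ((q + 2) / 2 : ℕ) < k →
      (s (k - 1) - 2 * s k + s (k + 1)) * cos (k * θ) = 0 := fun k hk => by
    have : ((q : ℝ) + 3) ≤ 2 * k := by exact_mod_cast (by omega : (q : ℤ) + 3 ≤ 2 * k)
    rw [hzero (k - 1) (by push_cast; linarith), hzero k (by linarith),
      hzero (k + 1) (by push_cast; linarith)]
    ring
  have hψ : ∀ k : ℤ, s (k - 1) - 2 * s k + s (k + 1) =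
      deriv (deriv (φ (q + 2))) ((((q + 2 : ℕ) : ℝ) + 1) / 2 - k) := fun k => by
    rw [deriv_deriv_of_rec hrec h1 hq]
    simp only [s, centralSamples]
    push_cast
    ring_nf
  rw [finsum_eq_of_even _ heven _ hvanish, nsmul_eq_mul]
  simp only [hψ, Int.cast_zero, Int.cast_natCast, sub_zero, zero_mul, cos_zero, mul_one]
  rw [fSym]
  push_cast
  ring

end Recurrence

theorem fSym_hyp_upper_general (α : ℝ) (hα : 0 < α) (φ : ℕ → ℝ → ℝ)
    (hφ1 : ∀ t : ℝ, φ 1 t =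
      if 0 ≤ t ∧ t < 1 then α / (2 * (Real.cosh α - 1)) * Real.sinh (α * t)
      else if 1 ≤ t ∧ t < 2 then α / (2 * (Real.cosh α - 1)) * Real.sinh (α * (2 - t))
      else 0)
    (hrec : ∀ q : ℕ, 2 ≤ q → ∀ t : ℝ,
      φ q t = ∫ s in (0:ℝ)..t, (φ (q - 1) s - φ (q - 1) (s - 1)))
    (p : ℕ) (hp : 4 ≤ p)
    (θ : ℝ) :
    fSym φ p θ ≤ 2 - 2 * Real.cos θ := by
  obtain ⟨q, hq, rfl⟩ : ∃ q, 2 ≤ q ∧ p = q + 2 := ⟨p - 2, by omega, by omega⟩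
  have hφ : φ 1 = hypGBSpline1 α := funext hφ1
  have h1 : IsSymmBump 2 (φ 1) := hφ ▸ isSymmBump_hypGBSpline1 hα
  have hint : ∫ t in (0 : ℝ)..2, φ 1 t = 1 := hφ ▸ integral_hypGBSpline1 hα
  have hb := isSymmBump_of_rec hrec h1 (by omega : 1 ≤ q)
  rw [fSym_eq_neg_finsum_secondDiff hrec h1 hq]
  exact neg_finsum_secondDiff_mul_cos_le _ hb.hasFiniteSupport_centralSamples
    (fun k => hb.nonneg _) (finsum_of_rec hrec h1 hint hq _) θ

theorem fSym_hyp_upper (α : ℝ) (hα : 0 < α) (φ : ℕ → ℝ → ℝ)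
    (hφ1 : ∀ t : ℝ, φ 1 t =
      if 0 ≤ t ∧ t < 1 then α / (2 * (Real.cosh α - 1)) * Real.sinh (α * t)
      else if 1 ≤ t ∧ t < 2 then α / (2 * (Real.cosh α - 1)) * Real.sinh (α * (2 - t))
      else 0)
    (hrec : ∀ q : ℕ, 2 ≤ q → ∀ t : ℝ,
      φ q t = ∫ s in (0:ℝ)..t, (φ (q - 1) s - φ (q - 1) (s - 1)))
    (p : ℕ) (hp : 4 ≤ p)
    (θ : ℝ) (hθ : θ ∈ Set.Icc (-Real.pi) Real.pi) :
    fSym φ p θ ≤ 2 - 2 * Real.cos θ :=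
  fSym_hyp_upper_general α hα φ hφ1 hrec p hp θ
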